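/- Let w be a log-convex weight on [0,1). Then there exists a power series with nonnegative coefficients, f(t) = Σ_{k≥0} a_k t^k with a_k ≥ 0, convergent on [0,1), such that f(t) ≍ w(t) on [0,1). -/

import Mathlib

open Set

/-- A log-convex weight: continuous, non-decreasing, strictly positive on `[0,1)`,
and `log w(r)` is a convex function of `log r` on `(0,1)`. -/
def IsLogConvexWeight (w : ℝ → ℝ) : Prop :=
  ContinuousOn w (Set.Ico 0 1) ∧ MonotoneOn w (Set.Ico 0 1) ∧
    (∀ r ∈ Set.Ico (0:ℝ) 1, 0 < w r) ∧
    ConvexOn ℝ (Set.Iio (0:ℝ)) (fun t => Real.log (w (Real.exp t)))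

/-!
Put `φ x = log w(eˣ)`, convex and non-decreasing on `(-∞, 0)`, and `L k = inf_{x<0} (φ x - k x)`,
so that `exp (L k) = inf_{0<t<1} w t / tᵏ`. Then `exp (L k) tᵏ ≤ w t`, and rounding the slope of a
supporting line of `φ` at `log t` up to an integer `k` gives `t w t ≤ exp (L k) tᵏ`: for `t` near
`1`, `w t` is comparable with the largest term of `∑ exp (L k) tᵏ`. The sequence `L` is concave and
unbounded, with increments tending to `0`.

The whole series can still be much larger than its largest term where `L` is nearly linear, so
only a sparse set of indices is kept: after `p`, the next index is the first `q` such that `L`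
bends by at least `1` on `[p, q]`, measured against both its first and its last slope there. Along
the kept indices the terms then decay geometrically on both sides of the largest term, which bounds
the sum by `4 w t`; and by minimality of each step some kept index comes within a factor
`exp (1 + L 1 - L 0)` of the largest term. A bounded weight is comparable with a constant.
-/

open Filter Real

lemma sum_range_le_two_mul_of_two_mul_le {u : ℕ → ℝ} (hu : ∀ j, 0 ≤ u j) :
    ∀ n, (∀ j, j + 1 < n → 2 * u (j + 1) ≤ u j) → ∑ j ∈ Finset.range n, u j ≤ 2 * u 0
  | 0, _ => by simpa using hu 0
  | n + 1, h => by
    have ih := sum_range_le_two_mul_of_two_mul_le (u := fun j => u (j + 1)) (fun _ => hu _) n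
      fun j hj => h (j + 1) (by omega)
    rw [Finset.sum_range_succ']
    rcases n with _ | n
    · rw [Finset.sum_range_zero]
      linarith [hu 0]
    · linarith [h 0 (by omega)]

lemma two_mul_exp_le_exp {a b : ℝ} (h : a + 1 ≤ b) : 2 * exp a ≤ exp b :=
  calc 2 * exp a ≤ exp 1 * exp a := by gcongr; linarith [add_one_le_exp (1 : ℝ)]
    _ = exp (a + 1) := by rw [exp_add, mul_comm]
    _ ≤ exp b := exp_le_exp.2 h

lemma sum_range_exp_le_of_unimodal {v : ℕ → ℝ} {J : ℕ} (hup : ∀ j < J, v j + 1 ≤ v (j + 1))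
    (hdown : ∀ j, J < j → v (j + 1) + 1 ≤ v j) (N : ℕ) :
    ∑ j ∈ Finset.range N, exp (v j) ≤ 2 * exp (v J) + 2 * exp (v (J + 1)) := by
  have hleft : ∑ j ∈ Finset.range (J + 1), exp (v j) ≤ 2 * exp (v J) := by
    rw [← Finset.sum_range_reflect]
    simpa using sum_range_le_two_mul_of_two_mul_le (u := fun i => exp (v (J - i)))
      (fun _ => (exp_pos _).le) (J + 1) fun i hi => two_mul_exp_le_exp <| by
        simpa [show J - (i + 1) + 1 = J - i by omega] using hup (J - (i + 1)) (by omega)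
  have hright : ∑ i ∈ Finset.range N, exp (v (J + 1 + i)) ≤ 2 * exp (v (J + 1)) := by
    simpa using sum_range_le_two_mul_of_two_mul_le (u := fun i => exp (v (J + 1 + i)))
      (fun _ => (exp_pos _).le) N fun i _ => two_mul_exp_le_exp (hdown (J + 1 + i) (by omega))
  calc ∑ j ∈ Finset.range N, exp (v j) ≤ ∑ j ∈ Finset.range (J + 1 + N), exp (v j) :=
        Finset.sum_le_sum_of_subset_of_nonneg (Finset.range_subset_range.2 (by omega))
          fun _ _ _ => (exp_pos _).le
    _ = _ := Finset.sum_range_add _ _ _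
    _ ≤ _ := add_le_add hleft hright

section ConcaveSequence

variable {L : ℕ → ℝ}

def increment (L : ℕ → ℝ) (k : ℕ) : ℝ := L (k + 1) - L k

/-- At `t = exp (-d)` the term `exp (L k) * t ^ k` is `exp (tilt L d k)`. -/
def tilt (L : ℕ → ℝ) (d : ℝ) (k : ℕ) : ℝ := L k - k * d

lemma tilt_succ (d : ℝ) (k : ℕ) : tilt L d (k + 1) = tilt L d k + (increment L k - d) := by
  simp only [tilt, increment]; push_cast; ring

lemma tilt_le_tilt_of_le_increment {d : ℝ} {j k : ℕ} (hjk : j ≤ k)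
    (h : ∀ i, j ≤ i → i < k → d ≤ increment L i) : tilt L d j ≤ tilt L d k := by
  induction k, hjk using Nat.le_induction with
  | base => exact le_rfl
  | succ k hjk ih =>
    rw [tilt_succ]
    linarith [ih fun i hji hik => h i hji (by omega), h k hjk (by omega)]

lemma tilt_le_tilt_of_increment_le {d : ℝ} {j k : ℕ} (hjk : j ≤ k)
    (h : ∀ i, j ≤ i → i < k → increment L i ≤ d) : tilt L d k ≤ tilt L d j := by
  induction k, hjk using Nat.le_induction with
  | base => exact le_rfl
  | succ k hjk ih =>
    rw [tilt_succ]
    linarith [ih fun i hji hik => h i hji (by omega), h k hjk (by omega)]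

lemma tilt_sub_tilt_le_of_le {d d' : ℝ} {p q : ℕ} (hpq : p ≤ q) (hd : d ≤ d') :
    tilt L d' q - tilt L d' p ≤ tilt L d q - tilt L d p := by
  have : (p : ℝ) ≤ q := by exact_mod_cast hpq
  simp only [tilt]
  nlinarith

/-- Along `[p, q]`, `L` rises at least `1` above the line with its last slope and falls at least `1`
below the line with its first slope. -/
def Separated (L : ℕ → ℝ) (p q : ℕ) : Prop :=
  p < q ∧ tilt L (increment L (q - 1)) p + 1 ≤ tilt L (increment L (q - 1)) q ∧
    tilt L (increment L p) q + 1 ≤ tilt L (increment L p) p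

lemma Separated.tilt_add_one_le_of_le_increment {p q : ℕ} {d : ℝ} (h : Separated L p q)
    (hd : d ≤ increment L (q - 1)) : tilt L d p + 1 ≤ tilt L d q := by
  linarith [h.2.1, tilt_sub_tilt_le_of_le (L := L) h.1.le hd]

lemma Separated.tilt_add_one_le_of_increment_le {p q : ℕ} {d : ℝ} (h : Separated L p q)
    (hd : increment L p ≤ d) : tilt L d q + 1 ≤ tilt L d p := by
  linarith [h.2.2, tilt_sub_tilt_le_of_le (L := L) h.1.le hd]

structure IsUnboundedSublinearConcave (L : ℕ → ℝ) : Prop where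
  antitone_increment : Antitone (increment L)
  increment_nonneg : ∀ k, 0 ≤ increment L k
  exists_increment_lt : ∀ d > 0, ∃ k, increment L k < d
  not_bddAbove : ¬ BddAbove (range L)

namespace IsUnboundedSublinearConcave

lemma monotone (hL : IsUnboundedSublinearConcave L) : Monotone L :=
  monotone_nat_of_le_succ fun k => sub_nonneg.1 (hL.increment_nonneg k)

lemma increment_pos (hL : IsUnboundedSublinearConcave L) (p : ℕ) : 0 < increment L p := by
  by_contra! h
  refine hL.not_bddAbove ⟨L p, ?_⟩
  rintro _ ⟨k, rfl⟩
  rcases le_total k p with hkp | hpk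
  · exact hL.monotone hkp
  · simpa [tilt] using tilt_le_tilt_of_increment_le (d := 0) hpk
      fun i hpi _ => (hL.antitone_increment hpi).trans h

lemma eventually_increment_lt (hL : IsUnboundedSublinearConcave L) {d : ℝ} (hd : 0 < d) :
    ∀ᶠ k in atTop, increment L k < d := by
  obtain ⟨k, hk⟩ := hL.exists_increment_lt d hd
  exact eventually_atTop.2 ⟨k, fun i hi => (hL.antitone_increment hi).trans_lt hk⟩

lemma tendsto_tilt_atBot (hL : IsUnboundedSublinearConcave L) {d : ℝ} (hd : 0 < d) :
    Tendsto (tilt L d) atTop atBot := by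
  obtain ⟨R, hR⟩ := eventually_atTop.1 (hL.eventually_increment_lt (half_pos hd))
  refine tendsto_atBot_mono' atTop (eventually_atTop.2 ⟨R, fun k hk => ?_⟩)
    (tendsto_atBot_add_const_left _ (tilt L (d / 2) R)
      (tendsto_natCast_atTop_atTop.atTop_mul_const_of_neg (neg_lt_zero.2 (half_pos hd))))
  have := tilt_le_tilt_of_increment_le (L := L) hk fun i hi _ => (hR i hi).le
  simp only [tilt] at this ⊢
  linarith

lemma exists_separated (hL : IsUnboundedSublinearConcave L) (p : ℕ) : ∃ q, Separated L p q := by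
  obtain ⟨_, ⟨n, rfl⟩, hn⟩ := not_bddAbove_iff.1 hL.not_bddAbove (L p + 2)
  have hpn : p ≤ n := by
    by_contra! h
    linarith [hL.monotone h.le]
  have hclimb : ∀ᶠ q in atTop,
      tilt L (increment L (q - 1)) p + 1 ≤ tilt L (increment L (q - 1)) q := by
    filter_upwards [eventually_ge_atTop (n + 1), (tendsto_sub_atTop_nat 1).eventually
      (hL.eventually_increment_lt (d := 1 / (n + 1)) (by positivity))] with q hq hinc
    have hnq : tilt L (increment L (q - 1)) n ≤ tilt L (increment L (q - 1)) q :=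
      tilt_le_tilt_of_le_increment (by omega) fun i _ hi => hL.antitone_increment (by omega)
    have hpos := hL.increment_nonneg (q - 1)
    have hsmall : n * increment L (q - 1) ≤ 1 := by
      rw [lt_div_iff₀ (by positivity)] at hinc
      nlinarith
    have : (0 : ℝ) ≤ p * increment L (q - 1) := by positivity
    simp only [tilt] at hnq ⊢
    linarith
  have hfall : ∀ᶠ q in atTop, tilt L (increment L p) q + 1 ≤ tilt L (increment L p) p := by
    filter_upwards [(hL.tendsto_tilt_atBot (hL.increment_pos p)).eventually_le_atBot
      (tilt L (increment L p) p - 1)] with q hq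
    linarith
  exact ((eventually_gt_atTop p).and (hclimb.and hfall)).exists

open Classical in
noncomputable def next (hL : IsUnboundedSublinearConcave L) (p : ℕ) : ℕ :=
  Nat.find (hL.exists_separated p)

noncomputable def selected (hL : IsUnboundedSublinearConcave L) : ℕ → ℕ
  | 0 => 0
  | j + 1 => hL.next (hL.selected j)

lemma selected_succ (hL : IsUnboundedSublinearConcave L) (j : ℕ) :
    hL.selected (j + 1) = hL.next (hL.selected j) := rfl

open Classical in
lemma separated_next (hL : IsUnboundedSublinearConcave L) (p : ℕ) :
    Separated L p (hL.next p) :=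
  Nat.find_spec (hL.exists_separated p)

open Classical in
lemma not_separated_of_lt_next (hL : IsUnboundedSublinearConcave L) {p q : ℕ}
    (hq : q < hL.next p) : ¬ Separated L p q :=
  Nat.find_min (hL.exists_separated p) hq

lemma strictMono_selected (hL : IsUnboundedSublinearConcave L) : StrictMono hL.selected :=
  strictMono_nat_of_lt_succ fun _ => (hL.separated_next _).1

lemma exists_selected_le_lt (hL : IsUnboundedSublinearConcave L) (m : ℕ) :
    ∃ J, hL.selected J ≤ m ∧ m < hL.selected (J + 1) := by
  classical
  have hex : ∃ j, m < hL.selected (j + 1) :=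
    ⟨m, Nat.lt_of_lt_of_le (Nat.lt_succ_self m) (hL.strictMono_selected.id_le (m + 1))⟩
  refine ⟨Nat.find hex, ?_, Nat.find_spec hex⟩
  rcases h : Nat.find hex with _ | J
  · exact Nat.zero_le m
  · exact not_lt.1 (Nat.find_min hex (h ▸ J.lt_succ_self))

lemma exists_pivot (hL : IsUnboundedSublinearConcave L) {d : ℝ} (hd : 0 < d) :
    ∃ m, (∀ k < m, d ≤ increment L k) ∧ increment L m < d := by
  classical
  have hex := hL.exists_increment_lt d hd
  exact ⟨Nat.find hex, fun k hk => not_lt.1 (Nat.find_min hex hk), Nat.find_spec hex⟩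

lemma tilt_le_tilt_pivot (hL : IsUnboundedSublinearConcave L) {d : ℝ} {m : ℕ}
    (hle : ∀ k < m, d ≤ increment L k) (hlt : increment L m < d) (k : ℕ) :
    tilt L d k ≤ tilt L d m := by
  rcases le_total k m with hkm | hmk
  · exact tilt_le_tilt_of_le_increment hkm fun i _ him => hle i him
  · exact tilt_le_tilt_of_increment_le hmk fun i hmi _ =>
      ((hL.antitone_increment hmi).trans_lt hlt).le

lemma tilt_le_of_not_separated (hL : IsUnboundedSublinearConcave L) {d : ℝ} {p m q : ℕ}
    (hpm : p < m) (hmq : m < q) (hsep : ¬ Separated L p (q - 1))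
    (hle : ∀ k < m, d ≤ increment L k) (hlt : increment L m < d) :
    tilt L d m ≤ tilt L d p + (1 + increment L 0) ∨
      tilt L d m ≤ tilt L d q + (1 + increment L 0) := by
  have hdp : d ≤ increment L p :=
    (hle (m - 1) (by omega)).trans (hL.antitone_increment (by omega))
  have hp0 : increment L p ≤ increment L 0 := hL.antitone_increment p.zero_le
  obtain rfl | hmq' := eq_or_lt_of_le (Nat.succ_le_of_lt hmq)
  · right
    rw [tilt_succ]
    linarith [hL.increment_nonneg m]
  obtain ⟨r, rfl⟩ : ∃ r, q = r + 2 := ⟨q - 2, by omega⟩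
  rw [show r + 2 - 1 = r + 1 by omega] at hsep
  simp only [Separated, add_tsub_cancel_right, not_and_or, not_le] at hsep
  rcases hsep with hpr | hclimb | hfall
  · omega
  · left
    have h1 := tilt_sub_tilt_le_of_le (L := L) hpm.le
      ((hL.antitone_increment (by omega : m ≤ r)).trans hlt.le)
    have h2 : tilt L (increment L r) m ≤ tilt L (increment L r) (r + 1) :=
      tilt_le_tilt_of_le_increment (by omega) fun i _ hi => hL.antitone_increment (by omega)
    linarith [hL.increment_nonneg 0]
  · right
    have h1 := tilt_sub_tilt_le_of_le (L := L) (by omega : m ≤ r + 2) hdp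
    have h2 : tilt L (increment L p) m ≤ tilt L (increment L p) p :=
      tilt_le_tilt_of_increment_le hpm.le fun i hpi _ => hL.antitone_increment hpi
    have h3 := tilt_succ (L := L) (increment L p) (r + 1)
    linarith [hL.increment_nonneg (r + 1)]

lemma sum_range_exp_tilt_selected_le (hL : IsUnboundedSublinearConcave L) {d M : ℝ}
    (hd : 0 < d) (hM : ∀ k, tilt L d k ≤ M) (N : ℕ) :
    ∑ j ∈ Finset.range N, exp (tilt L d (hL.selected j)) ≤ 4 * exp M := by
  obtain ⟨m, hle, hlt⟩ := hL.exists_pivot hd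
  obtain ⟨J, hJm, hmJ⟩ := hL.exists_selected_le_lt m
  have hmono := hL.strictMono_selected
  have hsum := sum_range_exp_le_of_unimodal (v := fun j => tilt L d (hL.selected j)) (J := J)
    (fun j hj => (hL.separated_next _).tilt_add_one_le_of_le_increment (hle _ ?_))
    (fun j hj => (hL.separated_next _).tilt_add_one_le_of_increment_le
      ((hL.antitone_increment ?_).trans hlt.le)) N
  · linarith [exp_le_exp.2 (hM (hL.selected J)), exp_le_exp.2 (hM (hL.selected (J + 1)))]
  · have hsucc : hL.selected (j + 1) ≤ m := (hmono.monotone (by omega : j + 1 ≤ J)).trans hJm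
    exact (Nat.sub_lt ((Nat.zero_le _).trans_lt (hmono j.lt_succ_self)) one_pos).trans_le hsucc
  · exact hmJ.le.trans (hmono.monotone (show J + 1 ≤ j by omega))

lemma exists_tilt_le_tilt_selected (hL : IsUnboundedSublinearConcave L) {d : ℝ} (hd : 0 < d) :
    ∃ j, ∀ k, tilt L d k ≤ tilt L d (hL.selected j) + (1 + increment L 0) := by
  obtain ⟨m, hle, hlt⟩ := hL.exists_pivot hd
  obtain ⟨J, hJm, hmJ⟩ := hL.exists_selected_le_lt m
  suffices ∃ j, tilt L d m ≤ tilt L d (hL.selected j) + (1 + increment L 0) from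
    this.imp fun j hj k => (hL.tilt_le_tilt_pivot hle hlt k).trans hj
  obtain hJ | hJ := eq_or_lt_of_le hJm
  · exact ⟨J, by rw [hJ]; linarith [hL.increment_nonneg 0]⟩
  have hsep : ¬ Separated L (hL.selected J) (hL.selected (J + 1) - 1) :=
    hL.not_separated_of_lt_next (Nat.sub_one_lt (by omega))
  rcases hL.tilt_le_of_not_separated hJ hmJ hsep hle hlt with h | h
  · exact ⟨J, h⟩
  · exact ⟨J + 1, h⟩

noncomputable def coeff (hL : IsUnboundedSublinearConcave L) : ℕ → ℝ :=
  (range hL.selected).indicator fun k => exp (L k)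

lemma coeff_nonneg (hL : IsUnboundedSublinearConcave L) (k : ℕ) : 0 ≤ hL.coeff k :=
  indicator_nonneg (fun _ _ => (exp_pos _).le) k

lemma coeff_zero (hL : IsUnboundedSublinearConcave L) : hL.coeff 0 = exp (L 0) :=
  indicator_of_mem (mem_range_self 0) _

lemma coeff_mul_pow_selected (hL : IsUnboundedSublinearConcave L) {t : ℝ} (ht : 0 < t) (j : ℕ) :
    hL.coeff (hL.selected j) * t ^ hL.selected j = exp (tilt L (-log t) (hL.selected j)) := by
  rw [coeff, indicator_of_mem (mem_range_self j), tilt, mul_neg, sub_neg_eq_add, exp_add,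
    exp_nat_mul, exp_log ht]

lemma coeff_mul_pow_eq_zero (hL : IsUnboundedSublinearConcave L) (t : ℝ) {k : ℕ}
    (hk : k ∉ range hL.selected) : hL.coeff k * t ^ k = 0 := by
  rw [coeff, indicator_of_notMem hk, zero_mul]

lemma summable_coeff_mul_pow_iff (hL : IsUnboundedSublinearConcave L) {t : ℝ} (ht : 0 < t) :
    (Summable fun k => hL.coeff k * t ^ k) ↔
      Summable fun j => exp (tilt L (-log t) (hL.selected j)) := by
  simp_rw [← hL.coeff_mul_pow_selected ht]
  exact (hL.strictMono_selected.injective.summable_iff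
    fun k hk => hL.coeff_mul_pow_eq_zero t hk).symm

lemma tsum_coeff_mul_pow (hL : IsUnboundedSublinearConcave L) {t : ℝ} (ht : 0 < t) :
    ∑' k, hL.coeff k * t ^ k = ∑' j, exp (tilt L (-log t) (hL.selected j)) := by
  simp_rw [← hL.coeff_mul_pow_selected ht]
  exact (hL.strictMono_selected.injective.tsum_eq
    (Function.support_subset_iff'.2 fun k hk => hL.coeff_mul_pow_eq_zero t hk)).symm

lemma summable_coeff_mul_pow_and_tsum_le (hL : IsUnboundedSublinearConcave L) {t M : ℝ}
    (ht : t ∈ Ioo 0 1) (hM : ∀ k, tilt L (-log t) k ≤ M) :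
    (Summable fun k => hL.coeff k * t ^ k) ∧ ∑' k, hL.coeff k * t ^ k ≤ 4 * exp M := by
  have hd : 0 < -log t := neg_pos.2 (log_neg ht.1 ht.2)
  have hpartial := hL.sum_range_exp_tilt_selected_le hd hM
  rw [hL.summable_coeff_mul_pow_iff ht.1, hL.tsum_coeff_mul_pow ht.1]
  exact ⟨summable_of_sum_range_le (fun _ => (exp_pos _).le) hpartial,
    Real.tsum_le_of_sum_range_le (fun _ => (exp_pos _).le) hpartial⟩

lemma summable_coeff_mul_pow (hL : IsUnboundedSublinearConcave L) {t : ℝ} (ht : t ∈ Ico 0 1) :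
    Summable fun k => hL.coeff k * t ^ k := by
  rcases ht.1.eq_or_lt with rfl | hpos
  · exact (hasSum_single 0 fun k hk => by simp [hk]).summable
  · have hd : 0 < -log t := neg_pos.2 (log_neg hpos ht.2)
    obtain ⟨m, hle, hlt⟩ := hL.exists_pivot hd
    exact (hL.summable_coeff_mul_pow_and_tsum_le ⟨hpos, ht.2⟩
      (hL.tilt_le_tilt_pivot hle hlt)).1

lemma tsum_coeff_mul_pow_zero (hL : IsUnboundedSublinearConcave L) :
    ∑' k, hL.coeff k * (0 : ℝ) ^ k = exp (L 0) := by
  rw [tsum_eq_single 0 fun k hk => by simp [hk], pow_zero, mul_one, hL.coeff_zero]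

lemma exp_le_tsum_coeff_mul_pow (hL : IsUnboundedSublinearConcave L) {t : ℝ}
    (ht : t ∈ Ico 0 1) : exp (L 0) ≤ ∑' k, hL.coeff k * t ^ k := by
  simpa [hL.coeff_zero] using (hL.summable_coeff_mul_pow ht).le_tsum 0
    fun k _ => mul_nonneg (hL.coeff_nonneg k) (pow_nonneg ht.1 k)

lemma exp_tilt_le_tsum_coeff_mul_pow (hL : IsUnboundedSublinearConcave L) {t : ℝ}
    (ht : t ∈ Ioo 0 1) (k : ℕ) :
    exp (tilt L (-log t) k) ≤ exp (1 + increment L 0) * ∑' k, hL.coeff k * t ^ k := by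
  have hd : 0 < -log t := neg_pos.2 (log_neg ht.1 ht.2)
  obtain ⟨j, hj⟩ := hL.exists_tilt_le_tilt_selected hd
  have hsum := (hL.summable_coeff_mul_pow_iff ht.1).1
    (hL.summable_coeff_mul_pow (Ioo_subset_Ico_self ht))
  rw [hL.tsum_coeff_mul_pow ht.1]
  calc exp (tilt L (-log t) k) ≤ exp (tilt L (-log t) (hL.selected j) + (1 + increment L 0)) :=
        exp_le_exp.2 (hj k)
    _ = exp (1 + increment L 0) * exp (tilt L (-log t) (hL.selected j)) := by
        rw [exp_add, mul_comm]
    _ ≤ _ := by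
        gcongr
        exact hsum.le_tsum j fun _ _ => (exp_pos _).le

end IsUnboundedSublinearConcave

end ConcaveSequence

lemma ConvexOn.add_rightDeriv_mul_sub_le {S : Set ℝ} {f : ℝ → ℝ} {x y : ℝ}
    (hf : ConvexOn ℝ S f) (hx : x ∈ interior S) (hy : y ∈ S) :
    f x + derivWithin f (Ioi x) x * (y - x) ≤ f y := by
  rcases lt_trichotomy y x with hyx | rfl | hxy
  · have h1 := hf.slope_le_leftDeriv_of_mem_interior hy hx hyx
    have h2 := mul_le_mul_of_nonneg_right (hf.leftDeriv_le_rightDeriv_of_mem_interior hx)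
      (sub_pos.2 hyx).le
    rw [slope_def_field, div_le_iff₀ (sub_pos.2 hyx)] at h1
    linarith
  · simp
  · have h1 := hf.rightDeriv_le_slope_of_mem_interior hx hy hxy
    rw [slope_def_field, le_div_iff₀ (sub_pos.2 hxy)] at h1
    linarith

section SupportIntercept

variable {φ : ℝ → ℝ}

/-- The intercept of the highest line of slope `k` below `φ` on `(-∞, 0)`; for `φ = logProfile w`
it is `log (inf_{0<t<1} w t / t ^ k)`. -/
noncomputable def supportIntercept (φ : ℝ → ℝ) (k : ℕ) : ℝ :=
  ⨅ x : Iio (0 : ℝ), (φ x - k * x)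

lemma tilt_supportIntercept_le (hφ : BddBelow (φ '' Iio 0)) {x : ℝ} (hx : x < 0) (k : ℕ) :
    tilt (supportIntercept φ) (-x) k ≤ φ x := by
  obtain ⟨c, hc⟩ := hφ
  have hbdd : BddBelow (range fun y : Iio (0 : ℝ) => φ y - k * y) := by
    refine ⟨c, ?_⟩
    rintro _ ⟨⟨y, hy⟩, rfl⟩
    have := hc (mem_image_of_mem φ hy)
    have : (k : ℝ) * y ≤ 0 := mul_nonpos_of_nonneg_of_nonpos k.cast_nonneg (le_of_lt hy)
    dsimp only
    linarith
  have := ciInf_le hbdd ⟨x, hx⟩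
  simp only [tilt, supportIntercept] at this ⊢
  linarith

lemma le_supportIntercept {c : ℝ} {k : ℕ} (h : ∀ x < 0, c ≤ φ x - k * x) :
    c ≤ supportIntercept φ k :=
  le_ciInf fun x => h x x.2

lemma isUnboundedSublinearConcave_supportIntercept (hmono : MonotoneOn φ (Iio 0))
    (hbdd : BddBelow (φ '' Iio 0)) (hunb : ¬ BddAbove (φ '' Iio 0)) :
    IsUnboundedSublinearConcave (supportIntercept φ) where
  antitone_increment := antitone_nat_of_succ_le fun k => by
    have := le_supportIntercept (φ := φ) (k := k + 1)
      (c := (supportIntercept φ k + supportIntercept φ (k + 2)) / 2) fun x hx => by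
        have h1 := tilt_supportIntercept_le hbdd hx k
        have h2 := tilt_supportIntercept_le hbdd hx (k + 2)
        simp only [tilt] at h1 h2
        push_cast at h1 h2 ⊢
        linarith
    simp only [increment]
    linarith
  increment_nonneg k := by
    have := le_supportIntercept (φ := φ) (k := k + 1) (c := supportIntercept φ k) fun x hx => by
      have := tilt_supportIntercept_le hbdd hx k
      simp only [tilt] at this
      push_cast
      linarith
    simp only [increment]
    linarith
  exists_increment_lt d hd := by
    by_contra! h
    obtain ⟨k, hk⟩ := exists_nat_gt ((φ (-(d / 2)) - supportIntercept φ 0) / (d / 2))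
    have h1 := tilt_le_tilt_of_le_increment (L := supportIntercept φ) (d := d) k.zero_le
      fun i _ _ => h i
    have h2 := tilt_supportIntercept_le hbdd (x := -(d / 2)) (by linarith) k
    rw [div_lt_iff₀ (half_pos hd)] at hk
    simp only [tilt, neg_neg] at h1 h2
    push_cast at h1
    linarith
  not_bddAbove := by
    rintro ⟨A, hA⟩
    obtain ⟨_, ⟨x₀, hx₀, rfl⟩, hAx₀⟩ := not_bddAbove_iff.1 hunb A
    obtain ⟨c, hc⟩ := hbdd
    have hx₀' : x₀ < 0 := hx₀
    obtain ⟨k, hk⟩ := exists_nat_gt ((A - c) / (-x₀))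
    rw [div_lt_iff₀ (neg_pos.2 hx₀')] at hk
    have hle := le_supportIntercept (φ := φ) (k := k) (c := min (φ x₀) (c - k * x₀)) fun x hx => by
      have hk0 : (0 : ℝ) ≤ k := k.cast_nonneg
      rcases le_total x₀ x with h | h
      · have := hmono hx₀ hx h
        nlinarith [min_le_left (φ x₀) (c - k * x₀)]
      · have := hc (mem_image_of_mem φ hx)
        nlinarith [min_le_right (φ x₀) (c - k * x₀)]
    have := hA ⟨k, rfl⟩
    have := lt_min hAx₀ (show A < c - k * x₀ by linarith)
    linarith

lemma exists_le_tilt_supportIntercept (hmono : MonotoneOn φ (Iio 0))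
    (hcvx : ConvexOn ℝ (Iio 0) φ) {x : ℝ} (hx : x < 0) :
    ∃ k, φ x + x ≤ tilt (supportIntercept φ) (-x) k := by
  set c := derivWithin φ (Ioi x) x
  have hsupp : ∀ y < 0, φ x + c * (y - x) ≤ φ y := fun y hy =>
    hcvx.add_rightDeriv_mul_sub_le (by rwa [interior_Iio]) hy
  have hc : 0 ≤ c := by
    have := hsupp (x - 1) (by linarith)
    have := hmono (mem_Iio.2 (by linarith : x - 1 < 0)) hx (by linarith)
    linarith
  -- rounding the slope `c` up to `⌈c⌉₊` lowers the supporting line by less than `-x` on `(x, 0)`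
  refine ⟨⌈c⌉₊, ?_⟩
  have hk1 := Nat.le_ceil c
  have hk2 := Nat.ceil_lt_add_one hc
  have := le_supportIntercept (φ := φ) (k := ⌈c⌉₊) (c := φ x + x - ⌈c⌉₊ * x) fun y hy => by
    have := hsupp y hy
    rcases le_total y x with hyx | hxy
    · nlinarith [mul_nonneg (sub_nonneg.2 hk1) (sub_nonneg.2 hyx)]
    · nlinarith [mul_nonneg (sub_nonneg.2 hk2.le) (sub_nonneg.2 hxy)]
  simp only [tilt]
  linarith

end SupportIntercept

section Weight

variable {w : ℝ → ℝ}

noncomputable def logProfile (w : ℝ → ℝ) (x : ℝ) : ℝ := log (w (exp x))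

lemma exp_mem_Ico {x : ℝ} (hx : x < 0) : exp x ∈ Ico (0 : ℝ) 1 :=
  ⟨(exp_pos x).le, exp_lt_one_iff.2 hx⟩

lemma monotoneOn_logProfile (hmono : MonotoneOn w (Ico 0 1))
    (hpos : ∀ t ∈ Ico (0 : ℝ) 1, 0 < w t) : MonotoneOn (logProfile w) (Iio 0) :=
  fun _ hx _ hy hxy => log_le_log (hpos _ (exp_mem_Ico hx))
    (hmono (exp_mem_Ico hx) (exp_mem_Ico hy) (exp_le_exp.2 hxy))

lemma log_le_logProfile (hmono : MonotoneOn w (Ico 0 1))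
    (hpos : ∀ t ∈ Ico (0 : ℝ) 1, 0 < w t) {x : ℝ} (hx : x < 0) :
    log (w 0) ≤ logProfile w x :=
  log_le_log (hpos 0 (left_mem_Ico.2 one_pos))
    (hmono (left_mem_Ico.2 one_pos) (exp_mem_Ico hx) (exp_pos x).le)

lemma bddBelow_logProfile (hmono : MonotoneOn w (Ico 0 1))
    (hpos : ∀ t ∈ Ico (0 : ℝ) 1, 0 < w t) : BddBelow (logProfile w '' Iio 0) :=
  ⟨log (w 0), by rintro _ ⟨x, hx, rfl⟩; exact log_le_logProfile hmono hpos hx⟩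

lemma not_bddAbove_logProfile (hmono : MonotoneOn w (Ico 0 1))
    (hunb : ¬ BddAbove (w '' Ico 0 1)) : ¬ BddAbove (logProfile w '' Iio 0) := by
  rintro ⟨A, hA⟩
  refine hunb ⟨exp A, ?_⟩
  rintro _ ⟨t, ht, rfl⟩
  have hs : max t (1 / 2) ∈ Ioo (0 : ℝ) 1 :=
    ⟨lt_max_of_lt_right (by norm_num), max_lt ht.2 (by norm_num)⟩
  have hA' := hA (mem_image_of_mem _ (show log (max t (1 / 2)) ∈ Iio 0 from log_neg hs.1 hs.2))
  rw [logProfile, exp_log hs.1] at hA'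
  calc w t ≤ w (max t (1 / 2)) := hmono ht ⟨hs.1.le, hs.2⟩ (le_max_left _ _)
    _ ≤ exp (log (w (max t (1 / 2)))) := le_exp_log _
    _ ≤ exp A := exp_le_exp.2 hA'

lemma exp_logProfile_log (hpos : ∀ t ∈ Ico (0 : ℝ) 1, 0 < w t) {t : ℝ} (ht : t ∈ Ioo 0 1) :
    exp (logProfile w (log t)) = w t := by
  rw [logProfile, exp_log ht.1, exp_log (hpos t ⟨ht.1.le, ht.2⟩)]

lemma le_exp_supportIntercept_zero (hmono : MonotoneOn w (Ico 0 1))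
    (hpos : ∀ t ∈ Ico (0 : ℝ) 1, 0 < w t) : w 0 ≤ exp (supportIntercept (logProfile w) 0) := by
  rw [← exp_log (hpos 0 (left_mem_Ico.2 one_pos))]
  exact exp_le_exp.2
    (le_supportIntercept fun x hx => by simpa using log_le_logProfile hmono hpos hx)

lemma exp_supportIntercept_zero_le (hmono : MonotoneOn w (Ico 0 1))
    (hpos : ∀ t ∈ Ico (0 : ℝ) 1, 0 < w t) {t : ℝ} (ht : t ∈ Ioo 0 1) :
    exp (supportIntercept (logProfile w) 0) ≤ w t := by
  rw [← exp_logProfile_log hpos ht]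
  simpa [tilt] using exp_le_exp.2
    (tilt_supportIntercept_le (bddBelow_logProfile hmono hpos) (log_neg ht.1 ht.2) 0)

lemma tsum_coeff_mul_pow_le (hmono : MonotoneOn w (Ico 0 1))
    (hpos : ∀ t ∈ Ico (0 : ℝ) 1, 0 < w t)
    (hL : IsUnboundedSublinearConcave (supportIntercept (logProfile w))) {t : ℝ}
    (ht : t ∈ Ico 0 1) : ∑' k, hL.coeff k * t ^ k ≤ max 4 (w (1 / 2) / w 0) * w t := by
  have hw0 := hpos 0 (left_mem_Ico.2 one_pos)
  rcases ht.1.eq_or_lt with rfl | htpos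
  · rw [hL.tsum_coeff_mul_pow_zero]
    calc exp (supportIntercept (logProfile w) 0) ≤ w (1 / 2) :=
          exp_supportIntercept_zero_le hmono hpos (by norm_num)
      _ = w (1 / 2) / w 0 * w 0 := by field_simp
      _ ≤ max 4 (w (1 / 2) / w 0) * w 0 := by gcongr; exact le_max_right _ _
  · have ht' : t ∈ Ioo 0 1 := ⟨htpos, ht.2⟩
    have := (hL.summable_coeff_mul_pow_and_tsum_le ht'
      (tilt_supportIntercept_le (bddBelow_logProfile hmono hpos) (log_neg htpos ht.2))).2
    rw [exp_logProfile_log hpos ht'] at this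
    calc _ ≤ 4 * w t := this
      _ ≤ _ := by have := hpos t ht; gcongr; exact le_max_left _ _

lemma le_tsum_coeff_mul_pow (hmono : MonotoneOn w (Ico 0 1))
    (hpos : ∀ t ∈ Ico (0 : ℝ) 1, 0 < w t) (hcvx : ConvexOn ℝ (Iio 0) (logProfile w))
    (hL : IsUnboundedSublinearConcave (supportIntercept (logProfile w))) {t : ℝ}
    (ht : t ∈ Ico 0 1) :
    min (exp (-(2 + increment (supportIntercept (logProfile w)) 0))) (w 0 / w (exp (-1))) * w t ≤
      ∑' k, hL.coeff k * t ^ k := by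
  set c := increment (supportIntercept (logProfile w)) 0
  have hwt := hpos t ht
  have hwe := hpos _ (exp_mem_Ico neg_one_lt_zero)
  rcases lt_or_ge t (exp (-1)) with hsmall | hlarge
  · calc _ ≤ w 0 / w (exp (-1)) * w t := by gcongr; exact min_le_right _ _
      _ ≤ w 0 / w (exp (-1)) * w (exp (-1)) := by
          have := hpos 0 (left_mem_Ico.2 one_pos)
          gcongr
          exact hmono ht (exp_mem_Ico neg_one_lt_zero) hsmall.le
      _ = w 0 := by field_simp
      _ ≤ _ := le_exp_supportIntercept_zero hmono hpos
      _ ≤ _ := hL.exp_le_tsum_coeff_mul_pow ht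
  · have htpos : 0 < t := (exp_pos _).trans_le hlarge
    have ht' : t ∈ Ioo 0 1 := ⟨htpos, ht.2⟩
    obtain ⟨k, hk⟩ := exists_le_tilt_supportIntercept (monotoneOn_logProfile hmono hpos) hcvx
      (log_neg htpos ht.2)
    have hchord : t * w t ≤ exp (1 + c) * ∑' k, hL.coeff k * t ^ k :=
      calc t * w t = exp (logProfile w (log t) + log t) := by
            rw [exp_add, exp_logProfile_log hpos ht', exp_log htpos, mul_comm]
        _ ≤ _ := exp_le_exp.2 hk
        _ ≤ _ := hL.exp_tilt_le_tsum_coeff_mul_pow ht' k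
    calc _ ≤ exp (-(2 + c)) * w t := by gcongr; exact min_le_left _ _
      _ = exp (-(1 + c)) * (exp (-1) * w t) := by rw [← mul_assoc, ← exp_add]; ring_nf
      _ ≤ exp (-(1 + c)) * (t * w t) := by gcongr
      _ ≤ exp (-(1 + c)) * (exp (1 + c) * ∑' k, hL.coeff k * t ^ k) := by gcongr
      _ = _ := by rw [← mul_assoc, ← exp_add, neg_add_cancel, exp_zero, one_mul]

def HasEquivPowerSeries (w : ℝ → ℝ) : Prop :=
  ∃ a : ℕ → ℝ, (∀ k, 0 ≤ a k) ∧
    (∀ t ∈ Set.Ico (0:ℝ) 1, Summable (fun k => a k * t ^ k)) ∧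
    ∃ C₁ > (0:ℝ), ∃ C₂ > (0:ℝ), ∀ t ∈ Set.Ico (0:ℝ) 1,
      C₁ * w t ≤ ∑' k, a k * t ^ k ∧ (∑' k, a k * t ^ k) ≤ C₂ * w t

lemma hasEquivPowerSeries_of_bddAbove (hmono : MonotoneOn w (Ico 0 1))
    (hpos : ∀ t ∈ Ico (0 : ℝ) 1, 0 < w t) (hbdd : BddAbove (w '' Ico 0 1)) :
    HasEquivPowerSeries w := by
  obtain ⟨B, hB⟩ := hbdd
  have hw0 := hpos 0 (left_mem_Ico.2 one_pos)
  have hwB : ∀ t ∈ Ico (0 : ℝ) 1, w t ≤ B := fun t ht => hB (mem_image_of_mem w ht)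
  have hB0 : 0 < B := hw0.trans_le (hwB 0 (left_mem_Ico.2 one_pos))
  set a : ℕ → ℝ := Pi.single 0 B
  have hsum : ∀ t : ℝ, HasSum (fun k => a k * t ^ k) B := fun t => by
    simpa [a] using hasSum_single (f := fun k => a k * t ^ k) 0 fun k hk => by simp [a, hk]
  refine ⟨a, fun k => ?_, fun t _ => (hsum t).summable, 1, one_pos, B / w 0,
    by positivity, fun t ht => ?_⟩
  · by_cases hk : k = 0 <;> simp [a, hk, hB0.le]
  · rw [(hsum t).tsum_eq, one_mul]
    refine ⟨hwB t ht, ?_⟩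
    calc B = B / w 0 * w 0 := by field_simp
      _ ≤ B / w 0 * w t := by gcongr; exact hmono (left_mem_Ico.2 one_pos) ht ht.1

lemma hasEquivPowerSeries_of_not_bddAbove (hmono : MonotoneOn w (Ico 0 1))
    (hpos : ∀ t ∈ Ico (0 : ℝ) 1, 0 < w t) (hcvx : ConvexOn ℝ (Iio 0) (logProfile w))
    (hunb : ¬ BddAbove (w '' Ico 0 1)) : HasEquivPowerSeries w := by
  have hL := isUnboundedSublinearConcave_supportIntercept (monotoneOn_logProfile hmono hpos)
    (bddBelow_logProfile hmono hpos) (not_bddAbove_logProfile hmono hunb)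
  have hw0 := hpos 0 (left_mem_Ico.2 one_pos)
  have hwe := hpos _ (exp_mem_Ico neg_one_lt_zero)
  exact ⟨hL.coeff, hL.coeff_nonneg, fun t ht => hL.summable_coeff_mul_pow ht, _,
    lt_min (exp_pos _) (by positivity), _, lt_max_of_lt_left four_pos,
    fun t ht => ⟨le_tsum_coeff_mul_pow hmono hpos hcvx hL ht,
      tsum_coeff_mul_pow_le hmono hpos hL ht⟩⟩

end Weight

/-- Every log-convex weight on `[0,1)` is equivalent to a power series with
nonnegative coefficients convergent on `[0,1)`. -/
theorem logConvexWeight_equiv_power_series (w : ℝ → ℝ) (hw : IsLogConvexWeight w) :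
    ∃ a : ℕ → ℝ, (∀ k, 0 ≤ a k) ∧
      (∀ t ∈ Set.Ico (0:ℝ) 1, Summable (fun k => a k * t ^ k)) ∧
      ∃ C₁ > (0:ℝ), ∃ C₂ > (0:ℝ), ∀ t ∈ Set.Ico (0:ℝ) 1,
        C₁ * w t ≤ ∑' k, a k * t ^ k ∧ (∑' k, a k * t ^ k) ≤ C₂ * w t := by
  obtain ⟨-, hmono, hpos, hcvx⟩ := hw
  by_cases hbdd : BddAbove (w '' Ico 0 1)
  · exact hasEquivPowerSeries_of_bddAbove hmono hpos hbdd
  · exact hasEquivPowerSeries_of_not_bddAbove hmono hpos hcvx hbdd
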